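/- Let d ≥ 3 be an integer and let M be the (d+1) × (d+1) real matrix with rows and columns indexed by 0,…,d defined by: M(0,1) = 1; M(1,0) = 2; M(i,i+1) = 1 for 1 ≤ i ≤ d−2; M(d−1,d) = 2; M(i,i−1) = 1 for 2 ≤ i ≤ d; all diagonal entries 0; and all other entries 0. Then the set of eigenvalues of M is exactly { 2·cos(jπ/d) : j = 0, 1, …, d }. -/

import Mathlib

open Polynomial Real

/-- The first intersection matrix of the P-polynomial association scheme of the
ordinary `2d`-gon: the `(d+1) × (d+1)` tridiagonal matrix with zero diagonal,
subdiagonal entries `(2, 1, …, 1)` and superdiagonal entries `(1, …, 1, 2)`. -/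
noncomputable def evenGonMatrix (d : ℕ) : Matrix (Fin (d + 1)) (Fin (d + 1)) ℝ :=
  Matrix.of fun i j : Fin (d + 1) =>
    if (i : ℕ) = 1 ∧ (j : ℕ) = 0 then 2
    else if (i : ℕ) = d - 1 ∧ (j : ℕ) = d then 2
    else if (j : ℕ) = (i : ℕ) + 1 then 1
    else if (i : ℕ) = (j : ℕ) + 1 then 1
    else 0

lemma evenGon_sum_single {n a : ℕ} (ha : a < n) (F : ℕ → ℝ)
    (h : ∀ m < n, m ≠ a → F m = 0) : ∑ m ∈ Finset.range n, F m = F a := by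
  rw [← Finset.sum_singleton F a]
  refine (Finset.sum_subset ?_ ?_).symm
  · simpa using ha
  · intro m hm hm'
    exact h m (Finset.mem_range.mp hm) (by simpa using hm')

lemma evenGon_sum_pair {n a b : ℕ} (ha : a < n) (hb : b < n) (hab : a ≠ b) (F : ℕ → ℝ)
    (h : ∀ m < n, m ≠ a → m ≠ b → F m = 0) :
    ∑ m ∈ Finset.range n, F m = F a + F b := by
  rw [← Finset.sum_pair hab]
  refine (Finset.sum_subset ?_ ?_).symm
  · intro m hm
    simp only [Finset.mem_insert, Finset.mem_singleton] at hm
    rcases hm with rfl | rfl <;> simp [ha, hb]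
  · intro m hm hm'
    simp only [Finset.mem_insert, Finset.mem_singleton] at hm'
    push_neg at hm'
    exact h m (Finset.mem_range.mp hm) hm'.1 hm'.2

/-- natural-number-indexed entry function of `evenGonMatrix`. -/
noncomputable def egE (d : ℕ) : ℕ → ℕ → ℝ := fun a b =>
  if a = 1 ∧ b = 0 then 2
  else if a = d - 1 ∧ b = d then 2
  else if b = a + 1 then 1
  else if a = b + 1 then 1
  else 0

/-- natural-number-indexed eigenvector. -/
noncomputable def egV (d : ℕ) (θ : ℝ) : ℕ → ℝ := fun m =>
  if m = 0 then 1 else if m = d then Real.cos (d * θ) else 2 * Real.cos (m * θ)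

lemma egKey (d : ℕ) (hd : 3 ≤ d) (j : ℕ) (hj : j ≤ d) (n : ℕ) (hn : n < d + 1) :
    ∑ m ∈ Finset.range (d + 1), egE d n m * egV d (j * π / d) m
      = (2 * Real.cos (j * π / d)) * egV d (j * π / d) n := by
  have hd0 : (0:ℝ) < d := by exact_mod_cast (by omega : 0 < d)
  set θ : ℝ := j * π / d with hθ
  have hsin : Real.sin ((d:ℝ) * θ) = 0 := by
    have h1 : (d:ℝ) * θ = j * π := by rw [hθ]; field_simp
    rw [h1]; exact Real.sin_nat_mul_pi j
  rcases eq_or_ne n 0 with rfl | h0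
  · rw [evenGon_sum_single (a := 1) (by omega)]
    · unfold egE egV
      rw [if_neg (by omega), if_neg (by omega), if_pos (by omega),
        if_neg (by omega), if_neg (by omega), if_pos rfl]
      push_cast
      rw [one_mul]
      ring
    · intro m hm hm1
      unfold egE
      rw [if_neg (by omega), if_neg (by omega), if_neg (by omega), if_neg (by omega), zero_mul]
  rcases eq_or_ne n 1 with rfl | h1
  · rw [evenGon_sum_pair (a := 0) (b := 2) (by omega) (by omega) (by omega)]
    · unfold egE egV
      rw [if_pos (by omega), if_pos rfl, if_neg (by omega), if_neg (by omega),
        if_pos (by omega), if_neg (by omega), if_neg (by omega), if_neg (by omega),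
        if_neg (by omega)]
      push_cast
      rw [one_mul, Real.cos_two_mul]
      ring
    · intro m hm hm0 hm2
      unfold egE
      rw [if_neg (by omega), if_neg (by omega), if_neg (by omega), if_neg (by omega), zero_mul]
  obtain hnd | hdd := eq_or_ne n d
  · subst hnd
    rw [evenGon_sum_single (a := n - 1) (by omega)]
    · unfold egE egV
      rw [if_neg (by omega), if_neg (by omega), if_neg (by omega), if_pos (by omega),
        if_neg (by omega), if_neg (by omega), if_neg (by omega), if_pos rfl]
      have hc : ((n - 1 : ℕ) : ℝ) = (n : ℝ) - 1 := by
        push_cast [Nat.cast_sub (by omega : 1 ≤ n)]; ring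
      rw [hc, show ((n:ℝ) - 1) * θ = (n:ℝ) * θ - θ by ring, Real.cos_sub, hsin]
      ring
    · intro m hm hm1
      unfold egE
      rw [if_neg (by omega), if_neg (by omega), if_neg (by omega), if_neg (by omega), zero_mul]
  obtain hnd1 | hd1 := eq_or_ne n (d - 1)
  · rw [evenGon_sum_pair (a := d - 2) (b := d) (by omega) (by omega) (by omega)]
    · unfold egE egV
      rw [if_neg (by omega), if_neg (by omega), if_neg (by omega), if_pos (by omega),
        if_neg (by omega), if_neg (by omega), if_neg (by omega), if_pos (by omega),
        if_neg (by omega), if_pos rfl, if_neg (by omega), if_neg (by omega)]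
      have hc2 : ((d - 2 : ℕ) : ℝ) = (d : ℝ) - 2 := by
        push_cast [Nat.cast_sub (by omega : 2 ≤ d)]; ring
      have hc1 : ((n : ℕ) : ℝ) = (d : ℝ) - 1 := by
        rw [hnd1]; push_cast [Nat.cast_sub (by omega : 1 ≤ d)]; ring
      rw [hc2, hc1, show ((d:ℝ) - 2) * θ = ((d:ℝ) - 1) * θ - θ by ring,
        show (d:ℝ) * θ = ((d:ℝ) - 1) * θ + θ by ring, Real.cos_sub, Real.cos_add]
      ring
    · intro m hm hma hmb
      unfold egE
      rw [if_neg (by omega), if_neg (by omega), if_neg (by omega), if_neg (by omega), zero_mul]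
  -- interior case : 2 ≤ n ≤ d - 2
  · have hnb : 2 ≤ n ∧ n + 2 ≤ d := by omega
    rw [evenGon_sum_pair (a := n - 1) (b := n + 1) (by omega) (by omega) (by omega)]
    · unfold egE egV
      rw [if_neg (by omega), if_neg (by omega), if_neg (by omega), if_pos (by omega),
        if_neg (by omega), if_neg (by omega), if_neg (by omega), if_neg (by omega),
        if_pos rfl, if_neg (by omega), if_neg (by omega), if_neg (by omega), if_neg (by omega)]
      have hc : ((n - 1 : ℕ) : ℝ) = (n : ℝ) - 1 := by
        push_cast [Nat.cast_sub (by omega : 1 ≤ n)]; ring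
      rw [hc]
      push_cast
      rw [show ((n:ℝ) - 1) * θ = (n:ℝ) * θ - θ by ring,
        show ((n:ℝ) + 1) * θ = (n:ℝ) * θ + θ by ring, Real.cos_sub, Real.cos_add]
      ring
    · intro m hm hma hmb
      unfold egE
      rw [if_neg (by omega), if_neg (by omega), if_neg (by omega), if_neg (by omega), zero_mul]

lemma evenGon_eval_charpoly {n R : Type*} [Fintype n] [DecidableEq n] [CommRing R]
    (M : Matrix n n R) (t : R) :
    M.charpoly.eval t = (t • (1 : Matrix n n R) - M).det := by
  rw [Matrix.charpoly, Polynomial.eval, ← coe_eval₂RingHom, RingHom.map_det]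
  congr 1
  ext i j
  by_cases h : i = j
  · subst h
    simp [Matrix.charmatrix_apply_eq, Matrix.one_apply]
  · simp [Matrix.charmatrix_apply_ne _ _ _ h, Matrix.one_apply, h]

lemma evenGon_root (d : ℕ) (hd : 3 ≤ d) (j : ℕ) (hj : j ≤ d) :
    ((evenGonMatrix d).charpoly).IsRoot (2 * Real.cos (j * π / d)) := by
  classical
  set θ : ℝ := j * π / d with hθ
  set μ : ℝ := 2 * Real.cos θ with hμ
  set v : Fin (d + 1) → ℝ := fun i => egV d θ (i : ℕ) with hv
  have hv0 : v ≠ 0 := by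
    intro h
    have h0 := congrFun h ⟨0, by omega⟩
    simp [hv, egV] at h0
  have hsum : ∀ i : Fin (d + 1), (Matrix.mulVec (evenGonMatrix d) v) i = μ * v i := by
    intro i
    have h1 : (Matrix.mulVec (evenGonMatrix d) v) i
        = ∑ m ∈ Finset.range (d + 1), egE d (i : ℕ) m * egV d θ m :=
      Fin.sum_univ_eq_sum_range (fun m => egE d (i : ℕ) m * egV d θ m) (d + 1)
    rw [h1, egKey d hd j hj (i : ℕ) i.is_lt]
  have hmv : (μ • (1 : Matrix (Fin (d + 1)) (Fin (d + 1)) ℝ) - evenGonMatrix d).mulVec v = 0 := by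
    funext i
    rw [Matrix.sub_mulVec, Matrix.smul_mulVec, Matrix.one_mulVec]
    simp [hsum i]
  have hdet : (μ • (1 : Matrix (Fin (d + 1)) (Fin (d + 1)) ℝ) - evenGonMatrix d).det = 0 :=
    Matrix.exists_mulVec_eq_zero_iff.mp ⟨v, hv0, hmv⟩
  rw [Polynomial.IsRoot, evenGon_eval_charpoly]
  exact hdet

/-- The set of eigenvalues of the first intersection matrix of the ordinary
`2d`-gon scheme is exactly `{2 cos(jπ/d) : j = 0, …, d}`. -/
theorem eigenvalues_evenGonMatrix (d : ℕ) (hd : 3 ≤ d) :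
    {mu : ℂ | ((evenGonMatrix d).map (Complex.ofReal)).charpoly.IsRoot mu}
      = {mu : ℂ | ∃ j : ℕ, j ≤ d ∧ mu = ((2 * Real.cos (j * π / d) : ℝ) : ℂ)} := by
  classical
  have hd0 : (0:ℝ) < d := by exact_mod_cast (by omega : 0 < d)
  set p : Polynomial ℂ := ((evenGonMatrix d).map (Complex.ofReal)).charpoly with hp
  have hmap : p = ((evenGonMatrix d).charpoly).map (Complex.ofRealHom) :=
    Matrix.charpoly_map (evenGonMatrix d) Complex.ofRealHom
  have hne : p ≠ 0 := (Matrix.charpoly_monic _).ne_zero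
  have hdeg : p.natDegree = d + 1 := by
    rw [hp, Matrix.charpoly_natDegree_eq_dim, Fintype.card_fin]
  set g : ℕ → ℂ := fun j => ((2 * Real.cos (j * π / d) : ℝ) : ℂ) with hg
  have hroot : ∀ j ≤ d, p.IsRoot (g j) := by
    intro j hj
    rw [hmap]
    exact Polynomial.IsRoot.map (f := Complex.ofRealHom) (evenGon_root d hd j hj)
  have hinj : Set.InjOn g (Finset.range (d + 1)) := by
    intro a ha b hb hab
    simp only [Finset.coe_range, Set.mem_Iio] at ha hb
    have ha' : (a:ℝ) * π / d ∈ Set.Icc 0 π := by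
      constructor
      · positivity
      · rw [div_le_iff₀ hd0]
        have : (a:ℝ) ≤ d := by exact_mod_cast (by omega : a ≤ d)
        nlinarith [Real.pi_pos]
    have hb' : (b:ℝ) * π / d ∈ Set.Icc 0 π := by
      constructor
      · positivity
      · rw [div_le_iff₀ hd0]
        have : (b:ℝ) ≤ d := by exact_mod_cast (by omega : b ≤ d)
        nlinarith [Real.pi_pos]
    have hcos : Real.cos ((a:ℝ) * π / d) = Real.cos ((b:ℝ) * π / d) := by
      have h2 : (2 * Real.cos ((a:ℝ) * π / d) : ℝ) = 2 * Real.cos ((b:ℝ) * π / d) := by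
        simp only [hg] at hab
        exact_mod_cast hab
      linarith
    have hne' : π / (d:ℝ) ≠ 0 := ne_of_gt (by positivity)
    have h4 : (a:ℝ) * (π / d) = (b:ℝ) * (π / d) := by
      have h5 := Real.injOn_cos ha' hb' hcos
      calc (a:ℝ) * (π/d) = (a:ℝ) * π / d := by ring
        _ = (b:ℝ) * π / d := h5
        _ = (b:ℝ) * (π/d) := by ring
    exact_mod_cast mul_right_cancel₀ hne' h4
  set T : Finset ℂ := (Finset.range (d + 1)).image g with hT
  have hTcard : T.card = d + 1 := by
    rw [hT, Finset.card_image_of_injOn hinj, Finset.card_range]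
  have hsub : T.val ≤ p.roots := by
    rw [Multiset.le_iff_subset T.nodup]
    intro a ha
    rcases Finset.mem_image.mp (show a ∈ (Finset.range (d + 1)).image g from ha) with ⟨j, hj, rfl⟩
    rw [Polynomial.mem_roots hne]
    exact hroot j (Nat.lt_succ_iff.mp (Finset.mem_range.mp hj))
  have heq : T.val = p.roots := by
    refine Multiset.eq_of_le_of_card_le hsub ?_
    have h1 : p.roots.card ≤ d + 1 := hdeg ▸ p.card_roots'
    have h2 : (T.val).card = d + 1 := hTcard
    omega
  ext mu
  simp only [Set.mem_setOf_eq]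
  constructor
  · intro h
    have hm : mu ∈ p.roots := (Polynomial.mem_roots hne).mpr h
    rw [← heq] at hm
    rcases Finset.mem_image.mp (show mu ∈ (Finset.range (d + 1)).image g from hm) with ⟨j, hj, rfl⟩
    exact ⟨j, Nat.lt_succ_iff.mp (Finset.mem_range.mp hj), rfl⟩
  · rintro ⟨j, hj, rfl⟩
    exact hroot j hj
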